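/- arXiv:2002.11988 — 8 statements merged into one kernel-verified Lean document; each statement's English description precedes it below -/
import Mathlib

section
/- Let k be a field of characteristic not two and α, β ∈ k*. The Killing form of the Lie algebra L(α,β) is, in the standard basis {x,y,z}, the diagonal form ⟨−2β, −2α, −2αβ⟩. -/
/-- The bracket of `L(α,β)` on `k³`. -/
def Lbracket {k : Type*} [Field k] (α β : k) (u v : Fin 3 → k) : Fin 3 → k :=
  ![α * (u 1 * v 2 - u 2 * v 1), β * (u 2 * v 0 - u 0 * v 2), u 0 * v 1 - u 1 * v 0]

/-- The matrix of `ad(u)` of `L(α,β)` in the standard basis. -/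
def adMatrix {k : Type*} [Field k] (α β : k) (u : Fin 3 → k) : Matrix (Fin 3) (Fin 3) k :=
  Matrix.of fun i j => Lbracket α β u (Pi.single j 1) i

/-- The Killing form `K(u,v) = tr(ad(u) ∘ ad(v))` of `L(α,β)` is the diagonal quadratic form
`⟨−2β, −2α, −2αβ⟩` in the standard basis. -/
theorem killing_form_of_L (k : Type*) [Field k] (hchar : (2 : k) ≠ 0) (α β : k)
    (hα : α ≠ 0) (hβ : β ≠ 0) (u v : Fin 3 → k) :
    (adMatrix α β u * adMatrix α β v).trace =
      (-2 * β) * (u 0 * v 0) + (-2 * α) * (u 1 * v 1) + (-2 * α * β) * (u 2 * v 2) := by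
  simp [Matrix.trace, Matrix.mul_apply, adMatrix, Lbracket, Fin.sum_univ_succ,
    Pi.single_apply, Matrix.diag]
  ring
end

section
/- Let k be a field of characteristic not two and α, β ∈ k*. The Lie algebra L(α,β) is simple. -/
lemma top_of_basis {k : Type*} [Field k] (I : Submodule k (Fin 3 → k))
    (h0 : (![1,0,0] : Fin 3 → k) ∈ I) (h1 : (![0,1,0] : Fin 3 → k) ∈ I)
    (h2 : (![0,0,1] : Fin 3 → k) ∈ I) : I = ⊤ := by
  rw [eq_top_iff]
  intro v _
  have hv : v = v 0 • ![1,0,0] + v 1 • ![0,1,0] + v 2 • ![(0:k),0,1] := by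
    funext i; fin_cases i <;> simp
  rw [hv]
  exact add_mem (add_mem (I.smul_mem _ h0) (I.smul_mem _ h1)) (I.smul_mem _ h2)

/-- `L(α,β)` is a simple Lie algebra: it is not abelian and every ideal (i.e. subspace closed
under bracketing with arbitrary elements) is trivial. -/
theorem L_is_simple (k : Type*) [Field k] (hchar : (2 : k) ≠ 0) (α β : k)
    (hα : α ≠ 0) (hβ : β ≠ 0) :
    (∃ u v : Fin 3 → k, Lbracket α β u v ≠ 0) ∧
    (∀ I : Submodule k (Fin 3 → k),
        (∀ u v : Fin 3 → k, v ∈ I → Lbracket α β u v ∈ I) → I = ⊥ ∨ I = ⊤) := by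
  constructor
  · refine ⟨![1,0,0], ![0,1,0], ?_⟩
    intro h
    have := congrFun h 2
    simp [Lbracket] at this
  · intro I hI
    by_cases hbot : I = ⊥
    · exact Or.inl hbot
    right
    obtain ⟨w, hwI, hw⟩ := Submodule.exists_mem_ne_zero_of_ne_bot hbot
    -- derive coordinate projections of w in I
    have key1 : (![0, w 1, w 2] : Fin 3 → k) ∈ I := by
      have h := hI ![1,0,0] _ (hI ![1,0,0] w hwI)
      have heq : ((-β)⁻¹ : k) • Lbracket α β ![1,0,0] (Lbracket α β ![1,0,0] w)
          = ![0, w 1, w 2] := by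
        funext i
        fin_cases i <;> simp [Lbracket] <;> field_simp
      have := I.smul_mem ((-β)⁻¹) h
      rwa [heq] at this
    have key2 : (![w 0, 0, w 2] : Fin 3 → k) ∈ I := by
      have h := hI ![0,1,0] _ (hI ![0,1,0] w hwI)
      have heq : ((-α)⁻¹ : k) • Lbracket α β ![0,1,0] (Lbracket α β ![0,1,0] w)
          = ![w 0, 0, w 2] := by
        funext i
        fin_cases i <;> simp [Lbracket] <;> field_simp
      have := I.smul_mem ((-α)⁻¹) h
      rwa [heq] at this
    have kw0 : (![w 0, 0, 0] : Fin 3 → k) ∈ I := by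
      have := I.sub_mem hwI key1
      have heq : w - ![0, w 1, w 2] = ![w 0, 0, 0] := by
        funext i; fin_cases i <;> simp
      rwa [heq] at this
    have kw2 : (![0, 0, w 2] : Fin 3 → k) ∈ I := by
      have := I.sub_mem key2 kw0
      have heq : ![w 0, 0, w 2] - ![w 0, 0, 0] = ![(0:k), 0, w 2] := by
        funext i; fin_cases i <;> simp
      rwa [heq] at this
    have kw1 : (![0, w 1, 0] : Fin 3 → k) ∈ I := by
      have := I.sub_mem key1 kw2
      have heq : ![0, w 1, w 2] - ![0, 0, w 2] = ![(0:k), w 1, 0] := by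
        funext i; fin_cases i <;> simp
      rwa [heq] at this
    -- implications among basis vectors
    have step01 : (![1,0,0] : Fin 3 → k) ∈ I → (![0,1,0] : Fin 3 → k) ∈ I := by
      intro h
      have hb := I.smul_mem (β⁻¹) (hI ![0,0,1] _ h)
      have heq : (β⁻¹ : k) • Lbracket α β ![0,0,1] ![1,0,0] = ![0,1,0] := by
        funext i; fin_cases i <;> simp [Lbracket] <;> field_simp
      rwa [heq] at hb
    have step12 : (![0,1,0] : Fin 3 → k) ∈ I → (![0,0,1] : Fin 3 → k) ∈ I := by
      intro h
      have hb := hI ![1,0,0] _ h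
      have heq : Lbracket α β ![1,0,0] ![0,1,0] = ![(0:k),0,1] := by
        funext i; fin_cases i <;> simp [Lbracket]
      rwa [heq] at hb
    have step20 : (![0,0,1] : Fin 3 → k) ∈ I → (![1,0,0] : Fin 3 → k) ∈ I := by
      intro h
      have hb := I.smul_mem (α⁻¹) (hI ![0,1,0] _ h)
      have heq : (α⁻¹ : k) • Lbracket α β ![0,1,0] ![0,0,1] = ![1,0,0] := by
        funext i; fin_cases i <;> simp [Lbracket] <;> field_simp
      rwa [heq] at hb
    -- some coordinate of w is nonzero
    have hcase : w 0 ≠ 0 ∨ w 1 ≠ 0 ∨ w 2 ≠ 0 := by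
      by_contra h
      push_neg at h
      apply hw
      funext i; fin_cases i <;> simp [h.1, h.2.1, h.2.2]
    rcases hcase with h | h | h
    · have h0 : (![1,0,0] : Fin 3 → k) ∈ I := by
        have := I.smul_mem ((w 0)⁻¹) kw0
        have heq : ((w 0)⁻¹ : k) • ![w 0, 0, 0] = ![(1:k),0,0] := by
          funext i; fin_cases i <;> simp <;> field_simp
        rwa [heq] at this
      exact top_of_basis I h0 (step01 h0) (step12 (step01 h0))
    · have h1 : (![0,1,0] : Fin 3 → k) ∈ I := by
        have := I.smul_mem ((w 1)⁻¹) kw1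
        have heq : ((w 1)⁻¹ : k) • ![0, w 1, 0] = ![(0:k),1,0] := by
          funext i; fin_cases i <;> simp <;> field_simp
        rwa [heq] at this
      exact top_of_basis I (step20 (step12 h1)) h1 (step12 h1)
    · have h2 : (![0,0,1] : Fin 3 → k) ∈ I := by
        have := I.smul_mem ((w 2)⁻¹) kw2
        have heq : ((w 2)⁻¹ : k) • ![0, 0, w 2] = ![(0:k),0,1] := by
          funext i; fin_cases i <;> simp <;> field_simp
        rwa [heq] at this
      exact top_of_basis I (step20 h2) (step01 (step20 h2)) h2
end

section
/- Let k be a field of characteristic not two, s a three-dimensional simple Lie algebra over k with Killing form K, and h ∈ s. The characteristic polynomial of ad(h) is −X·(X² − K(h,h)/2). -/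
/-!
A simple Lie algebra is perfect, so `ad h` is a sum of commutators and hence traceless; it also
kills `h`, so it is singular. For a traceless singular endomorphism `f` of a 3-dimensional space
the characteristic polynomial reduces to `X³ + e₂ X`, and Newton's identity
`2 e₂ = (tr f)² - tr (f²)` gives `e₂ = -K(h,h)/2`, since
`K(h,h) = tr ((ad h)²)`.
-/

open Polynomial

namespace Matrix

variable {K : Type*} [Field K]

theorem charpoly_fin_three (h2 : (2 : K) ≠ 0) (M : Matrix (Fin 3) (Fin 3) K) :
    M.charpoly = X ^ 3 - C M.trace * X ^ 2 + C ((M.trace ^ 2 - (M * M).trace) / 2) * X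
      - C M.det := by
  have hminors : (M.trace ^ 2 - (M * M).trace) / 2 = M 0 0 * M 1 1 - M 0 1 * M 1 0
      + M 0 0 * M 2 2 - M 0 2 * M 2 0 + M 1 1 * M 2 2 - M 1 2 * M 2 1 := by
    rw [div_eq_iff h2]
    simp only [trace_fin_three, mul_apply, Fin.sum_univ_three]
    ring
  rw [hminors, charpoly, det_fin_three, det_fin_three]
  simp only [charmatrix_apply, diagonal_apply, trace_fin_three, Fin.reduceEq, ↓reduceIte, zero_sub,
    map_add, map_sub, map_mul]
  ring

end Matrix

namespace LinearMap

variable {K V : Type*} [Field K] [AddCommGroup V] [Module K V] [FiniteDimensional K V]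

theorem charpoly_of_finrank_eq_three (h2 : (2 : K) ≠ 0) (hV : Module.finrank K V = 3)
    (f : V →ₗ[K] V) :
    f.charpoly = X ^ 3 - C (trace K V f) * X ^ 2
      + C ((trace K V f ^ 2 - trace K V (f ∘ₗ f)) / 2) * X - C (LinearMap.det f) := by
  let b := Module.finBasisOfFinrankEq K V hV
  rw [← charpoly_toMatrix f b, Matrix.charpoly_fin_three h2, trace_eq_matrix_trace K b,
    trace_eq_matrix_trace K b, toMatrix_comp b b b, det_toMatrix]

end LinearMap

namespace LieAlgebra

variable {R L : Type*} [CommRing R] [LieRing L] [LieAlgebra R L]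

theorem IsSimple.lie_top_eq_top [IsSimple R L] :
    (⁅(⊤ : LieIdeal R L), (⊤ : LieIdeal R L)⁆ : LieIdeal R L) = ⊤ := by
  refine (IsSimple.eq_bot_or_eq_top _).resolve_left fun hbot ↦
    IsSimple.non_abelian R (L := L) ⟨fun x y ↦ ?_⟩
  simpa [hbot] using
    LieSubmodule.lie_mem_lie (LieSubmodule.mem_top x) (LieSubmodule.mem_top (R := R) (L := L) y)

theorem IsSimple.trace_ad_eq_zero [IsSimple R L] (x : L) : LinearMap.trace R L (ad R L x) = 0 :=
  LieModule.trace_toEnd_eq_zero_of_mem_lcs R L L le_rfl <| by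
    simp [LieModule.lowerCentralSeries_succ, IsSimple.lie_top_eq_top]

theorem det_ad_eq_zero {K : Type*} [Field K] [LieAlgebra K L] [FiniteDimensional K L] [Nontrivial L]
    (x : L) : LinearMap.det (ad K L x) = 0 := by
  rw [LinearMap.det_eq_zero_iff_ker_ne_bot, Submodule.ne_bot_iff]
  by_cases hx : x = 0
  · obtain ⟨y, hy⟩ := exists_ne (0 : L)
    exact ⟨y, by simp [hx], hy⟩
  · exact ⟨x, by simp, hx⟩

end LieAlgebra

/-- For a three-dimensional simple Lie algebra `s` over `k` (char ≠ 2) with Killing form `K`,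
the characteristic polynomial of `ad(h)` is `−X·(X² − K(h,h)/2)` (written monically, i.e.
up to the sign convention for characteristic polynomials). -/
theorem charpoly_ad_three_dim_simple (k : Type*) [Field k] (hchar : (2 : k) ≠ 0)
    (L : Type*) [LieRing L] [LieAlgebra k L] [Module.Finite k L]
    (hdim : Module.finrank k L = 3) [LieAlgebra.IsSimple k L] (h : L) :
    LinearMap.charpoly ((LieAlgebra.ad k L h) : L →ₗ[k] L) =
      -(-X * (X ^ 2 - C (killingForm k L h h / 2))) := by
  have := LieAlgebra.IsSimple.nontrivial k (L := L)
  rw [LinearMap.charpoly_of_finrank_eq_three hchar hdim, LieAlgebra.IsSimple.trace_ad_eq_zero,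
    LieAlgebra.det_ad_eq_zero, ← killingForm_apply_apply]
  simp only [map_zero, map_neg, zero_pow two_ne_zero, zero_sub, neg_div]
  ring
end

section
/- Let k be a field of characteristic not two, α, β ∈ k*. The imaginary part Span⟨i, j, ij⟩ of the quaternion algebra (α,β / k), equipped with the commutator bracket, is a Lie algebra isomorphic to L(−β, −α). -/
/-!
In `(α,β / k)` one has `[i, j] = 2ij`, `[j, ij] = -2βi` and `[ij, i] = -2αj`, so the pure
quaternions `u₀i + u₁j + u₂ij` carry the commutator as twice the bracket of `L(-β,-α)`;
scaling by `1/2` turns this into a Lie algebra isomorphism.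
-/

open Quaternion

namespace QuaternionAlgebra

section CommRing

variable {R : Type*} [CommRing R] {c₁ c₂ c₃ : R}

def pureImag : (Fin 3 → R) →ₗ[R] ℍ[R,c₁,c₂,c₃] where
  toFun u := ⟨0, u 0, u 1, u 2⟩
  map_add' u v := by ext <;> simp
  map_smul' c u := by ext <;> simp

theorem pureImag_apply (u : Fin 3 → R) :
    (pureImag u : ℍ[R,c₁,c₂,c₃]) = ⟨0, u 0, u 1, u 2⟩ :=
  rfl

theorem pureImag_injective : Function.Injective (pureImag : (Fin 3 → R) → ℍ[R,c₁,c₂,c₃]) := by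
  intro u v h
  simp only [pureImag_apply, mk.injEq] at h
  obtain ⟨-, h0, h1, h2⟩ := h
  funext i
  fin_cases i <;> assumption

theorem pureImag_eq_linearCombination :
    (pureImag : (Fin 3 → R) →ₗ[R] ℍ[R,c₁,c₂,c₃]) =
      Fintype.linearCombination R ![⟨0,1,0,0⟩, ⟨0,0,1,0⟩, ⟨0,1,0,0⟩ * ⟨0,0,1,0⟩] := by
  refine LinearMap.ext fun u => ?_
  ext <;> simp [pureImag_apply, Fintype.linearCombination_apply, Fin.sum_univ_three]

theorem range_pureImag :
    LinearMap.range (pureImag : (Fin 3 → R) →ₗ[R] ℍ[R,c₁,c₂,c₃]) =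
      Submodule.span R {⟨0,1,0,0⟩, ⟨0,0,1,0⟩, ⟨0,1,0,0⟩ * ⟨0,0,1,0⟩} := by
  rw [pureImag_eq_linearCombination, Fintype.range_linearCombination, Matrix.range_cons,
    Matrix.range_cons_cons_empty, Set.singleton_union]

end CommRing

theorem pureImag_commutator {k : Type*} [Field k] {α β : k} (u v : Fin 3 → k) :
    (pureImag u * pureImag v - pureImag v * pureImag u : ℍ[k,α,β]) =
      (2 : k) • pureImag (Lbracket (-β) (-α) u v) := by
  ext <;> simp [pureImag_apply, Lbracket] <;> ring

end QuaternionAlgebra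

open QuaternionAlgebra in
theorem im_quaternion_iso_L_general (k : Type*) [Field k] (hchar : (2 : k) ≠ 0) (α β : k) :
    ∃ e : (Fin 3 → k) →ₗ[k] ℍ[k, α, β],
      Function.Injective e ∧
      LinearMap.range e = Submodule.span k
        { (⟨0,1,0,0⟩ : ℍ[k, α, β]), ⟨0,0,1,0⟩, (⟨0,1,0,0⟩ : ℍ[k, α, β]) * ⟨0,0,1,0⟩ } ∧
      ∀ u v : Fin 3 → k,
        e (Lbracket (-β) (-α) u v) = e u * e v - e v * e u := by
  have hhalf : (2⁻¹ : k) ≠ 0 := inv_ne_zero hchar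
  refine ⟨(2⁻¹ : k) • pureImag, (smul_right_injective _ hhalf).comp pureImag_injective,
    by rw [LinearMap.range_smul _ _ hhalf, range_pureImag], fun u v => ?_⟩
  simp only [LinearMap.smul_apply]
  rw [smul_mul_smul, smul_mul_smul, ← smul_sub, pureImag_commutator,
    smul_smul, inv_mul_cancel_right₀ hchar]

/-- The imaginary part `Span⟨i, j, ij⟩` of the quaternion algebra `(α,β / k)`, with the
commutator bracket, is a Lie algebra isomorphic to `L(−β,−α)`. -/
theorem im_quaternion_iso_L (k : Type*) [Field k] (hchar : (2 : k) ≠ 0) (α β : k)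
    (hα : α ≠ 0) (hβ : β ≠ 0) :
    ∃ e : (Fin 3 → k) →ₗ[k] ℍ[k, α, β],
      Function.Injective e ∧
      LinearMap.range e = Submodule.span k
        { (⟨0,1,0,0⟩ : ℍ[k, α, β]), ⟨0,0,1,0⟩, (⟨0,1,0,0⟩ : ℍ[k, α, β]) * ⟨0,0,1,0⟩ } ∧
      ∀ u v : Fin 3 → k,
        e (Lbracket (-β) (-α) u v) = e u * e v - e v * e u :=
  im_quaternion_iso_L_general k hchar α β
end

section
/- Let k be a field of characteristic not two and α, β, α', β' ∈ k*. The Lie algebras L(α,β) and L(α',β') are isomorphic if and only if the quadratic forms ⟨β, α, αβ⟩ and ⟨β', α', α'β'⟩ are isometric. -/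
namespace LHelper

variable {k : Type*} [Field k]

/-- The diagonal bilinear form `⟨β, α, αβ⟩`. -/
def Bform (α β : k) (u v : Fin 3 → k) : k :=
  β * (u 0 * v 0) + α * (u 1 * v 1) + α * β * (u 2 * v 2)

/-- The 3×3 determinant of three vectors. -/
def det3 (u v w : Fin 3 → k) : k :=
  u 0 * (v 1 * w 2 - v 2 * w 1) - u 1 * (v 0 * w 2 - v 2 * w 0) +
    u 2 * (v 0 * w 1 - v 1 * w 0)

lemma B_L (α β : k) (u v w : Fin 3 → k) :
    Bform α β (Lbracket α β u v) w = α * β * det3 u v w := by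
  simp [Bform, Lbracket, det3]
  ring

lemma Ldouble (α β : k) (u v : Fin 3 → k) :
    Lbracket α β u (Lbracket α β u v) = Bform α β u v • u - Bform α β u u • v := by
  funext i
  fin_cases i <;> simp [Lbracket, Bform] <;> ring

lemma Lneg (α β : k) (u v : Fin 3 → k) :
    Lbracket α β (-u) (-v) = Lbracket α β u v := by
  funext i
  fin_cases i <;> simp [Lbracket]

lemma det3_mulVec (N : Matrix (Fin 3) (Fin 3) k) (u v w : Fin 3 → k) :
    det3 (N.mulVec u) (N.mulVec v) (N.mulVec w) = N.det * det3 u v w := by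
  simp [det3, Matrix.mulVec, dotProduct, Fin.sum_univ_three, Matrix.det_fin_three]
  ring

lemma nondeg (α β : k) (hα : α ≠ 0) (hβ : β ≠ 0) (x : Fin 3 → k)
    (h : ∀ w, Bform α β x w = 0) : x = 0 := by
  funext i
  fin_cases i
  · have h0 := h (Pi.single 0 1)
    simp [Bform, Pi.single_apply] at h0
    simpa [hβ] using h0
  · have h1 := h (Pi.single 1 1)
    simp [Bform, Pi.single_apply] at h1
    simpa [hα] using h1
  · have h2 := h (Pi.single 2 1)
    simp [Bform, Pi.single_apply] at h2
    simpa [hα, hβ] using h2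

lemma qval (a b : k) (w : Fin 3 → k) :
    QuadraticMap.weightedSumSquares k ![b, a, a * b] w = Bform a b w w := by
  simp [Fin.sum_univ_three, Bform]

end LHelper

open LHelper in
/-- `L(α,β) ≅ L(α',β')` if and only if the diagonal quadratic forms `⟨β,α,αβ⟩` and
`⟨β',α',α'β'⟩` are isometric. -/
theorem L_iso_iff_forms_equivalent (k : Type*) [Field k] (hchar : (2 : k) ≠ 0)
    (α β α' β' : k) (hα : α ≠ 0) (hβ : β ≠ 0) (hα' : α' ≠ 0) (hβ' : β' ≠ 0) :
    (∃ g : (Fin 3 → k) ≃ₗ[k] (Fin 3 → k),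
        ∀ u v : Fin 3 → k, g (Lbracket α β u v) = Lbracket α' β' (g u) (g v)) ↔
    (QuadraticMap.weightedSumSquares k ![β, α, α * β]).Equivalent
      (QuadraticMap.weightedSumSquares k ![β', α', α' * β']) := by
  constructor
  · rintro ⟨g, hg⟩
    refine ⟨⟨g, fun u => ?_⟩⟩
    rw [qval, qval]
    by_contra hne
    have hc : Bform α β u u - Bform α' β' (g u) (g u) ≠ 0 :=
      sub_ne_zero.mpr fun h => hne h.symm
    have h1 : ∀ v, (Bform α β u u - Bform α' β' (g u) (g u)) • g v =
        (Bform α β u v - Bform α' β' (g u) (g v)) • g u := by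
      intro v
      have e1 : g (Lbracket α β u (Lbracket α β u v)) =
          Lbracket α' β' (g u) (Lbracket α' β' (g u) (g v)) := by rw [hg, hg]
      rw [Ldouble, Ldouble, map_sub, map_smul, map_smul] at e1
      have e2 : (Bform α β u u - Bform α' β' (g u) (g u)) • g v -
          (Bform α β u v - Bform α' β' (g u) (g v)) • g u =
          (Bform α' β' (g u) (g v) • g u - Bform α' β' (g u) (g u) • g v) -
          (Bform α β u v • g u - Bform α β u u • g v) := by module
      rw [← e1, sub_self] at e2
      exact sub_eq_zero.mp e2
    have ha : ∀ v, g v = ((Bform α β u u - Bform α' β' (g u) (g u))⁻¹ *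
        (Bform α β u v - Bform α' β' (g u) (g v))) • g u := by
      intro v
      rw [mul_smul, ← h1 v, smul_smul, inv_mul_cancel₀ hc, one_smul]
    obtain ⟨a0, h0⟩ : ∃ a0 : k, g (Pi.single 0 1 : Fin 3 → k) = a0 • g u := ⟨_, ha _⟩
    obtain ⟨a1, h1'⟩ : ∃ a1 : k, g (Pi.single 1 1 : Fin 3 → k) = a1 • g u := ⟨_, ha _⟩
    have hz : g (a1 • (Pi.single 0 1 : Fin 3 → k) - a0 • (Pi.single 1 1 : Fin 3 → k)) = 0 := by
      rw [map_sub, map_smul, map_smul, h0, h1', smul_smul, smul_smul, mul_comm, sub_self]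
    have hz2 : a1 • (Pi.single 0 1 : Fin 3 → k) - a0 • (Pi.single 1 1 : Fin 3 → k) = 0 :=
      g.map_eq_zero_iff.mp hz
    have h00 := congrFun hz2 (0 : Fin 3)
    simp [Pi.single_apply] at h00
    have hgz : g (Pi.single 1 1 : Fin 3 → k) = 0 := by rw [h1', h00, zero_smul]
    have := g.map_eq_zero_iff.mp hgz
    exact (one_ne_zero : (1:k) ≠ 0) (by simpa using congrFun this (1 : Fin 3))
  · rintro ⟨iso⟩
    set φ := iso.toLinearEquiv with hφdef
    have hq : ∀ u, Bform α' β' (φ u) (φ u) = Bform α β u u := by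
      intro u
      have h := iso.map_app u
      rw [qval, qval] at h
      exact h
    have hB : ∀ u v, Bform α' β' (φ u) (φ v) = Bform α β u v := by
      intro u v
      have h1 := hq (u + v)
      have h2 := hq u
      have h3 := hq v
      rw [map_add] at h1
      apply mul_left_cancel₀ hchar
      simp only [Bform, Pi.add_apply] at h1 h2 h3 ⊢
      linear_combination h1 - h2 - h3
    set N : Matrix (Fin 3) (Fin 3) k := Matrix.of fun i j => φ (Pi.single j 1) i with hN
    have hφ : ∀ u, φ u = N.mulVec u := by
      intro u
      have hu : u = u 0 • (Pi.single 0 1 : Fin 3 → k) + u 1 • (Pi.single 1 1 : Fin 3 → k) +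
          u 2 • (Pi.single 2 1 : Fin 3 → k) := by
        funext i
        fin_cases i <;> simp [Pi.single_apply]
      rw [hu, map_add, map_add, map_smul, map_smul, map_smul]
      funext i
      simp [Matrix.mulVec, dotProduct, Fin.sum_univ_three, Pi.single_apply, hN]
      ring
    have hent : ∀ i j, (N.transpose * Matrix.diagonal ![β', α', α' * β'] * N) i j =
        Bform α β (Pi.single i 1) (Pi.single j 1) := by
      intro i j
      have hb := hB (Pi.single i 1) (Pi.single j 1)
      rw [hφ, hφ] at hb
      rw [← hb]
      simp [Matrix.mul_apply, Fin.sum_univ_three, Bform, Matrix.diagonal,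
        Matrix.transpose_apply]
      ring
    have hGram : N.transpose * Matrix.diagonal ![β', α', α' * β'] * N =
        Matrix.diagonal ![β, α, α * β] := by
      ext i j
      rw [hent i j]
      fin_cases i <;> fin_cases j <;>
        simp [Bform, Pi.single_apply, Matrix.diagonal]
    have hdet : (α' * β' * N.det - α * β) * (α' * β' * N.det + α * β) = 0 := by
      have hd := congrArg Matrix.det hGram
      rw [Matrix.det_mul, Matrix.det_mul, Matrix.det_transpose, Matrix.det_diagonal,
        Matrix.det_diagonal] at hd
      simp [Fin.prod_univ_three] at hd
      linear_combination hd
    have key : ∀ u v, (α * β) • Lbracket α' β' (φ u) (φ v) =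
        (α' * β' * N.det) • φ (Lbracket α β u v) := by
      intro u v
      have hzero : ∀ z, Bform α' β' ((α * β) • Lbracket α' β' (φ u) (φ v) -
          (α' * β' * N.det) • φ (Lbracket α β u v)) z = 0 := by
        intro z
        obtain ⟨w, rfl⟩ : ∃ w, z = φ w := ⟨φ.symm z, (φ.apply_symm_apply z).symm⟩
        have eL : Bform α' β' (Lbracket α' β' (φ u) (φ v)) (φ w) =
            α' * β' * (N.det * det3 u v w) := by
          rw [B_L, hφ u, hφ v, hφ w, det3_mulVec]
        have eR : Bform α' β' (φ (Lbracket α β u v)) (φ w) = α * β * det3 u v w := by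
          rw [hB, B_L]
        have hlin : ∀ (s t : k) (x y z : Fin 3 → k),
            Bform α' β' (s • x - t • y) z =
              s * Bform α' β' x z - t * Bform α' β' y z := by
          intro s t x y z
          simp [Bform]
          ring
        rw [hlin, eL, eR]
        ring
      have := nondeg α' β' hα' hβ' _ hzero
      exact sub_eq_zero.mp this
    rcases mul_eq_zero.mp hdet with h | h
    · have hc : α' * β' * N.det = α * β := sub_eq_zero.mp h
      refine ⟨φ, fun u v => ?_⟩
      have hk := key u v
      rw [hc] at hk
      exact (smul_right_injective (Fin 3 → k) (mul_ne_zero hα hβ) hk).symm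
    · have hc : α' * β' * N.det = -(α * β) := eq_neg_of_add_eq_zero_left h
      refine ⟨φ ≪≫ₗ LinearEquiv.neg k, fun u v => ?_⟩
      have hk := key u v
      rw [hc, neg_smul, ← smul_neg] at hk
      have h2 : Lbracket α' β' (φ u) (φ v) = -φ (Lbracket α β u v) :=
        smul_right_injective (Fin 3 → k) (mul_ne_zero hα hβ) hk
      show -φ (Lbracket α β u v) = Lbracket α' β' (-φ u) (-φ v)
      rw [Lneg, h2]
end

section
/- Let k be a field of characteristic not two and Δ, Δ' ∈ k*. The Lie algebras L(−Δ,1) and L(−Δ',1) are isomorphic if and only if Δ/Δ' is a nonzero sum of two squares in k. In particular, L(−Δ,1) is split if and only if Δ is a sum of two squares. -/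
section

variable {k : Type*} [Field k]

/-- `-1/2` times the Killing form of `L(α,β)`. -/
def Lform (α β : k) (x y : Fin 3 → k) : k :=
  β * x 0 * y 0 + α * x 1 * y 1 + α * β * x 2 * y 2

theorem Lbracket_comm (α β : k) (u v : Fin 3 → k) :
    Lbracket α β u v = -Lbracket α β v u := by
  funext i; fin_cases i <;> simp [Lbracket] <;> ring

theorem Lbracket_Lbracket (α β : k) (a b c : Fin 3 → k) :
    Lbracket α β a (Lbracket α β b c) = Lform α β a c • b - Lform α β a b • c := by
  funext i; fin_cases i <;> simp [Lbracket, Lform] <;> ring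

theorem Lform_apply_basis_of_map_Lbracket {α β α' β' : k} (g : (Fin 3 → k) ≃ₗ[k] (Fin 3 → k))
    (hg : ∀ u v, g (Lbracket α β u v) = Lbracket α' β' (g u) (g v)) :
    Lform α' β' (g ![1, 0, 0]) (g ![1, 0, 0]) = β ∧
      Lform α' β' (g ![0, 1, 0]) (g ![0, 1, 0]) = α ∧
      Lform α' β' (g ![1, 0, 0]) (g ![0, 1, 0]) = 0 := by
  set u := g ![1, 0, 0]
  set a := g ![0, 1, 0]
  have indep : ∀ s t : k, s • u + t • a = 0 → s = 0 ∧ t = 0 := by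
    intro s t h
    rw [← map_smul, ← map_smul, ← map_add, LinearEquiv.map_eq_zero_iff] at h
    exact ⟨by simpa using congrFun h 0, by simpa using congrFun h 1⟩
  have hb : g ![0, 0, 1] = Lbracket α' β' u a := by
    rw [← hg]; congr 1; funext i; fin_cases i <;> simp [Lbracket]
  have h12 : Lbracket α' β' a (Lbracket α' β' u a) = α • u := by
    rw [← hb, ← hg, ← map_smul]; congr 1; funext i; fin_cases i <;> simp [Lbracket]
  have h20 : Lbracket α' β' (Lbracket α' β' u a) u = β • a := by
    rw [← hb, ← hg, ← map_smul]; congr 1; funext i; fin_cases i <;> simp [Lbracket]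
  rw [Lbracket_Lbracket] at h12
  rw [Lbracket_comm, Lbracket_Lbracket] at h20
  obtain ⟨h_aa, h_au⟩ := indep (Lform α' β' a a - α) (-Lform α' β' a u)
    (by linear_combination (norm := module) h12)
  obtain ⟨h_ua, h_uu⟩ := indep (-Lform α' β' u a) (Lform α' β' u u - β)
    (by linear_combination (norm := module) h20)
  exact ⟨by linear_combination h_uu, by linear_combination h_aa, by linear_combination -h_ua⟩

theorem exists_div_eq_sq_add_sq {Δ Δ' : k} (h2 : (2 : k) ≠ 0) (hΔ' : Δ' ≠ 0) {u a : Fin 3 → k}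
    (hu : Lform (-Δ') 1 u u = 1) (ha : Lform (-Δ') 1 a a = -Δ) (hua : Lform (-Δ') 1 u a = 0) :
    ∃ x y : k, Δ / Δ' = x ^ 2 + y ^ 2 := by
  obtain ⟨s, hs, hus⟩ : ∃ s : k, s ^ 2 = 1 ∧ u 0 - s ≠ 0 := by
    by_cases h1 : u 0 = 1
    · exact ⟨-1, by ring, by rw [h1]; norm_num; exact h2⟩
    · exact ⟨1, one_pow 2, sub_ne_zero.mpr h1⟩
  simp only [Lform] at hu ha hua
  -- `(0, x, y)` is the image of `a` under the reflection in `u - s e₀`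
  refine ⟨a 1 - a 0 * u 1 / (u 0 - s), a 2 - a 0 * u 2 / (u 0 - s), ?_⟩
  field_simp
  linear_combination (u 0 - s) ^ 2 * ha - 2 * a 0 * (u 0 - s) * hua + a 0 ^ 2 * hu - a 0 ^ 2 * hs

theorem exists_map_Lbracket_of_eq_mul {α α' x y : k} (hn : x ^ 2 + y ^ 2 ≠ 0)
    (hα : α = α' * (x ^ 2 + y ^ 2)) :
    ∃ g : (Fin 3 → k) ≃ₗ[k] (Fin 3 → k),
      ∀ u v, g (Lbracket α 1 u v) = Lbracket α' 1 (g u) (g v) := by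
  refine ⟨⟨⟨⟨fun u => ![u 0, x * u 1 - y * u 2, y * u 1 + x * u 2], ?_⟩, ?_⟩,
      fun v => ![v 0, (x * v 1 + y * v 2) / (x ^ 2 + y ^ 2),
        (x * v 2 - y * v 1) / (x ^ 2 + y ^ 2)], ?_, ?_⟩, ?_⟩
  · intro u v; funext i; fin_cases i <;> simp <;> ring
  · intro c u; funext i; fin_cases i <;> simp <;> ring
  · intro u; funext i; fin_cases i <;> simp <;> field_simp <;> ring
  · intro v; funext i; fin_cases i <;> simp <;> field_simp <;> ring
  · intro u v; funext i; fin_cases i <;> simp [Lbracket, hα] <;> ring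

theorem exists_map_Lbracket_iff {Δ Δ' : k} (h2 : (2 : k) ≠ 0) (hΔ : Δ ≠ 0) (hΔ' : Δ' ≠ 0) :
    (∃ g : (Fin 3 → k) ≃ₗ[k] (Fin 3 → k),
        ∀ u v, g (Lbracket (-Δ) 1 u v) = Lbracket (-Δ') 1 (g u) (g v)) ↔
      ∃ x y : k, Δ / Δ' = x ^ 2 + y ^ 2 := by
  constructor
  · rintro ⟨g, hg⟩
    obtain ⟨hu, ha, hua⟩ := Lform_apply_basis_of_map_Lbracket g hg
    exact exists_div_eq_sq_add_sq h2 hΔ' hu ha hua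
  · rintro ⟨x, y, hxy⟩
    refine exists_map_Lbracket_of_eq_mul (hxy ▸ div_ne_zero hΔ hΔ') ?_
    rw [← hxy]; field_simp

open LieAlgebra.SpecialLinear

def toSl2 (u : Fin 3 → k) : sl (Fin 2) k :=
  ⟨!![-u 2 / 2, (u 0 - u 1) / 2; (-u 0 - u 1) / 2, u 2 / 2],
    by simp [sl, Matrix.trace_fin_two, neg_div]⟩

theorem toSl2_val (u : Fin 3 → k) :
    (toSl2 u).1 = !![-u 2 / 2, (u 0 - u 1) / 2; (-u 0 - u 1) / 2, u 2 / 2] := rfl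

theorem exists_sl2_equiv (h2 : (2 : k) ≠ 0) :
    ∃ E : (Fin 3 → k) ≃ₗ[k] sl (Fin 2) k, ∀ u v, E (Lbracket (-1) 1 u v) = ⁅E u, E v⁆ := by
  refine ⟨⟨⟨⟨toSl2, ?_⟩, ?_⟩,
    fun A => ![A.1 0 1 - A.1 1 0, -A.1 0 1 - A.1 1 0, -2 * A.1 0 0], ?_, ?_⟩, ?_⟩
  · intro u v; ext i j; fin_cases i <;> fin_cases j <;> simp [toSl2_val] <;> ring
  · intro c u; ext i j; fin_cases i <;> fin_cases j <;> simp [toSl2_val] <;> ring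
  · intro u; funext i; fin_cases i <;> simp [toSl2_val] <;> field_simp <;> ring
  · intro A
    have hA : A.1 1 1 = -A.1 0 0 := by
      have h : A.1.trace = 0 := A.2
      rw [Matrix.trace_fin_two] at h
      linear_combination h
    ext i j; fin_cases i <;> fin_cases j <;> simp [toSl2_val, hA] <;> field_simp <;> ring
  · intro u v; ext i j
    simp only [LinearEquiv.coe_mk, LinearMap.coe_mk, AddHom.coe_mk, sl_bracket, toSl2_val]
    fin_cases i <;> fin_cases j <;> simp [Lbracket] <;> field_simp <;> ring

theorem exists_sl2_equiv_iff (h2 : (2 : k) ≠ 0) (α β : k) :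
    (∃ e : (Fin 3 → k) ≃ₗ[k] sl (Fin 2) k, ∀ u v, e (Lbracket α β u v) = ⁅e u, e v⁆) ↔
      ∃ g : (Fin 3 → k) ≃ₗ[k] (Fin 3 → k),
        ∀ u v, g (Lbracket α β u v) = Lbracket (-1) 1 (g u) (g v) := by
  obtain ⟨E, hE⟩ := exists_sl2_equiv h2
  constructor
  · rintro ⟨e, he⟩
    refine ⟨e.trans E.symm, fun u v => E.injective ?_⟩
    simp [he, hE]
  · rintro ⟨g, hg⟩
    exact ⟨g.trans E, fun u v => by simp [hg, hE]⟩

end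

/-- `L(−Δ,1) ≅ L(−Δ',1)` if and only if `Δ/Δ'` is a (nonzero) sum of two squares; in
particular `L(−Δ,1)` is split iff `Δ` is a sum of two squares. -/
theorem L_negD_one_iso_iff (k : Type*) [Field k] (hchar : (2 : k) ≠ 0)
    (Δ Δ' : k) (hΔ : Δ ≠ 0) (hΔ' : Δ' ≠ 0) :
    ((∃ g : (Fin 3 → k) ≃ₗ[k] (Fin 3 → k),
        ∀ u v : Fin 3 → k, g (Lbracket (-Δ) 1 u v) = Lbracket (-Δ') 1 (g u) (g v)) ↔
      ∃ x y : k, Δ / Δ' = x ^ 2 + y ^ 2) ∧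
    ((∃ e : (Fin 3 → k) ≃ₗ[k] LieAlgebra.SpecialLinear.sl (Fin 2) k,
        ∀ u v : Fin 3 → k, e (Lbracket (-Δ) 1 u v) = ⁅e u, e v⁆) ↔
      ∃ x y : k, Δ = x ^ 2 + y ^ 2) := by
  refine ⟨exists_map_Lbracket_iff hchar hΔ hΔ', ?_⟩
  rw [exists_sl2_equiv_iff hchar, exists_map_Lbracket_iff (Δ' := 1) hchar hΔ one_ne_zero, div_one]
end

section
/- Let k be a field of characteristic not two and s a non-split three-dimensional simple Lie algebra with Killing form K. Then K represents −2 if and only if s is isomorphic to L(−Δ,−Δ) for some Δ ∈ k*. -/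
/-!
Write `D = ad v`. Since `s` is simple, `tr D = 0`; since `D v = 0`, `det D = 0`; so Cayley–Hamilton
in dimension three reads `2 D³ = tr(D²) D`, and `K(v, v) = -2` gives `D³ = -D`. As `tr(D²) ≠ 0`,
`D` does not act by a scalar `c` on its image (else `D² = c D` would be traceless), so some `x` in
the image has `y = D x` independent of `x`, and then `D y = -x`. In the basis `x, y, v` the bracket
`⁅x, y⁆` lies in `ker D = k v`, say `⁅x, y⁆ = Δ v`, and `Δ ≠ 0` because otherwise `span {x, y}`
would be an ideal. The basis `x, y, Δ v` then exhibits `s ≅ L(Δ, Δ)`. Conversely the Killing form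
of `L(α, β)` is `-2 (β a² + α b² + αβ c²)`, which takes the value `-2` at `(0, 0, Δ⁻¹)` when
`α = β = -Δ`.
-/

open LinearMap LieAlgebra

theorem Matrix.two_smul_pow_three_fin_three {R : Type*} [CommRing R]
    (M : Matrix (Fin 3) (Fin 3) R) :
    (2 : R) • M ^ 3 = (M ^ 2).trace • M + (2 * M.trace) • M ^ 2 - M.trace ^ 2 • M
      + (2 * M.det) • 1 := by
  ext i j
  fin_cases i <;> fin_cases j <;>
    simp only [pow_succ, pow_zero, one_mul, Matrix.mul_apply, Fin.sum_univ_three,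
      Matrix.trace_fin_three, Matrix.det_fin_three, Matrix.add_apply, Matrix.sub_apply,
      Matrix.smul_apply, smul_eq_mul, Matrix.one_apply, Fin.reduceFinMk, Fin.reduceEq,
      ↓reduceIte] <;> ring

theorem LinearMap.two_smul_pow_three_of_finrank_eq_three {R M : Type*} [CommRing R]
    [StrongRankCondition R] [AddCommGroup M] [Module R M] [Module.Free R M] [Module.Finite R M]
    (hdim : Module.finrank R M = 3) (D : Module.End R M) :
    (2 : R) • D ^ 3 = trace R M (D ^ 2) • D + (2 * trace R M D) • D ^ 2 - trace R M D ^ 2 • D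
      + (2 * LinearMap.det D) • 1 := by
  let b := Module.finBasisOfFinrankEq R M hdim
  have hmat (f : Module.End R M) : toMatrix b b f = toMatrixAlgEquiv b f := rfl
  apply (toMatrixAlgEquiv b).injective
  simp only [trace_eq_matrix_trace R b, ← LinearMap.det_toMatrix b, hmat, map_add, map_sub,
    map_smul, map_pow, map_one]
  exact Matrix.two_smul_pow_three_fin_three _

theorem LinearMap.exists_linearIndependent_of_trace_sq_ne_zero {K V : Type*} [Field K]
    [AddCommGroup V] [Module K V] (D : Module.End K V) (htr : trace K V D = 0)
    (hsq : trace K V (D ^ 2) ≠ 0) : ∃ x ∈ range D, LinearIndependent K ![x, D x] := by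
  by_contra! h
  let D' : Module.End K (range D) := D.restrict fun x _ ↦ mem_range_self D x
  obtain ⟨a, ha⟩ := exists_eq_smul_id_of_forall_notLinearIndependent (f := D') fun x hx ↦
    h x x.2 <| LinearIndependent.pair_iff.mpr fun s t hst ↦
      LinearIndependent.pair_iff.mp hx s t (Subtype.ext (by simpa [D'] using hst))
  have hD2 : D ^ 2 = a • D := by
    ext u
    simpa [D', pow_two, Subtype.ext_iff] using congr($ha ⟨D u, mem_range_self D u⟩)
  exact hsq (by rw [hD2, map_smul, htr, smul_zero])

theorem LieAlgebra.IsSimple.trace_ad_eq_zero_s15 {R L : Type*} [CommRing R] [LieRing L]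
    [LieAlgebra R L] [IsSimple R L] (x : L) : trace R L (ad R L x) = 0 := by
  have hlcs : LieModule.lowerCentralSeries R L L 1 = ⊤ :=
    (IsSimple.eq_bot_or_eq_top _).resolve_left fun h ↦
      IsSimple.non_abelian R ((LieModule.trivial_iff_lower_central_eq_bot R L L).mpr h)
  exact LieModule.trace_toEnd_eq_zero_of_mem_lcs R L L le_rfl (hlcs ▸ LieSubmodule.mem_top x)

theorem killingForm_apply_self_eq_trace_ad_sq {R L : Type*} [CommRing R] [LieRing L]
    [LieAlgebra R L] (x : L) : killingForm R L x x = trace R L (ad R L x ^ 2) := by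
  rw [pow_two, Module.End.mul_eq_comp, killingForm_apply_apply]

theorem ne_zero_of_killingForm_apply_self_eq {R L : Type*} [CommRing R] [LieRing L]
    [LieAlgebra R L] {x : L} {c : R} (hc : c ≠ 0) (hx : killingForm R L x x = c) : x ≠ 0 := by
  rintro rfl
  exact hc (by simpa using hx.symm)

section

variable {k L : Type*} [Field k] [LieRing L] [LieAlgebra k L]

theorem ad_pow_three_eq_neg_of_killingForm_eq_neg_two [Module.Finite k L] [IsSimple k L]
    (hchar : (2 : k) ≠ 0) (hdim : Module.finrank k L = 3) {v : L}
    (hv : killingForm k L v v = -2) : ad k L v ^ 3 = -ad k L v := by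
  have hv0 := ne_zero_of_killingForm_apply_self_eq (neg_ne_zero.mpr hchar) hv
  have hdet : LinearMap.det (ad k L v) = 0 :=
    det_eq_zero_iff_ker_ne_bot.mpr ((Submodule.ne_bot_iff _).mpr ⟨v, lie_self v, hv0⟩)
  have hsq : trace k L (ad k L v ^ 2) = -2 := by rw [← killingForm_apply_self_eq_trace_ad_sq, hv]
  have h := LinearMap.two_smul_pow_three_of_finrank_eq_three hdim (ad k L v)
  rw [hsq, hdet, IsSimple.trace_ad_eq_zero_s15] at h
  exact smul_right_injective _ hchar (show (2 : k) • _ = (2 : k) • _ by rw [h]; module)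

section Rotation

variable {v x y : L}

theorem eq_zero_of_lie_smul_add_smul_eq_zero (hvx : ⁅v, x⁆ = y) (hvy : ⁅v, y⁆ = -x)
    (hxy : LinearIndependent k ![x, y]) {a b : k} (h : ⁅v, a • x + b • y⁆ = 0) :
    a = 0 ∧ b = 0 := by
  rw [lie_add, lie_smul, lie_smul, hvx, hvy, smul_neg, add_comm, ← neg_smul] at h
  obtain ⟨hb, ha⟩ := LinearIndependent.pair_iff.mp hxy _ _ h
  exact ⟨ha, neg_eq_zero.mp hb⟩

theorem linearIndependent_of_lie_eq (hvx : ⁅v, x⁆ = y) (hvy : ⁅v, y⁆ = -x)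
    (hxy : LinearIndependent k ![x, y]) (hv : v ≠ 0) : LinearIndependent k ![x, y, v] := by
  rw [Fintype.linearIndependent_iff]
  intro c hc
  simp only [Fin.sum_univ_three, Matrix.cons_val_zero, Matrix.cons_val_one,
    Matrix.cons_val_two, Matrix.head_cons, Matrix.tail_cons] at hc
  obtain ⟨h0, h1⟩ := eq_zero_of_lie_smul_add_smul_eq_zero hvx hvy hxy (a := c 0) (b := c 1)
    (by simpa [lie_add, lie_smul] using congr(⁅v, $hc⁆))
  have h2 : c 2 = 0 := by simpa [h0, h1, hv] using hc
  intro i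
  fin_cases i <;> assumption

theorem exists_eq_smul_of_lie_eq_zero [Module.Finite k L] (hdim : Module.finrank k L = 3)
    (hvx : ⁅v, x⁆ = y) (hvy : ⁅v, y⁆ = -x) (hxy : LinearIndependent k ![x, y]) (hv : v ≠ 0)
    {w : L} (hw : ⁅v, w⁆ = 0) : ∃ t : k, w = t • v := by
  have hspan := (linearIndependent_of_lie_eq hvx hvy hxy hv).span_eq_top_of_card_eq_finrank'
    (by simp [hdim])
  obtain ⟨c, rfl⟩ := (Submodule.mem_span_range_iff_exists_fun k).mp
    (show w ∈ Submodule.span k _ from hspan.ge trivial)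
  simp only [Fin.sum_univ_three, Matrix.cons_val_zero, Matrix.cons_val_one,
    Matrix.cons_val_two, Matrix.head_cons, Matrix.tail_cons] at hw ⊢
  obtain ⟨h0, h1⟩ := eq_zero_of_lie_smul_add_smul_eq_zero hvx hvy hxy (a := c 0) (b := c 1)
    (by simpa [lie_add, lie_smul] using hw)
  exact ⟨c 2, by simp [h0, h1]⟩

theorem lie_ne_zero_of_lie_eq [IsSimple k L] (hdim : Module.finrank k L = 3) (hvx : ⁅v, x⁆ = y)
    (hvy : ⁅v, y⁆ = -x) (hxy : LinearIndependent k ![x, y]) (hv : v ≠ 0) : ⁅x, y⁆ ≠ 0 := by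
  intro hxy0
  let S := Submodule.span k {x, y}
  have hxS : x ∈ S := Submodule.subset_span (by simp)
  have hyS : y ∈ S := Submodule.subset_span (by simp)
  let b := basisOfLinearIndependentOfCardEqFinrank (linearIndependent_of_lie_eq hvx hvy hxy hv)
    (by simp [hdim])
  have hb : ⇑b = ![x, y, v] := coe_basisOfLinearIndependentOfCardEqFinrank _ _
  have hbracket :
      (mk₂ k (⁅·, ·⁆ : L → L → L) add_lie smul_lie lie_add lie_smul).compr₂ S.mkQ = 0 := by
    refine LinearMap.ext_basis b b fun i j ↦ ?_
    rw [LinearMap.zero_apply, LinearMap.zero_apply, LinearMap.compr₂_apply,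
      Submodule.mkQ_apply, Submodule.Quotient.mk_eq_zero, mk₂_apply, hb]
    fin_cases i <;> fin_cases j <;>
      simp [hxy0, hvx, hvy, ← lie_skew x v, ← lie_skew y x, ← lie_skew y v, hxS, hyS, S.zero_mem]
  have hmem (l m : L) : ⁅l, m⁆ ∈ S := by
    simpa [Submodule.Quotient.mk_eq_zero] using congr($hbracket l m)
  let I : LieIdeal k L := { S with lie_mem := fun {l m} _ ↦ hmem l m }
  rcases IsSimple.eq_bot_or_eq_top I with hbot | htop
  · exact hxy.ne_zero 0 ((LieSubmodule.mem_bot x).mp (hbot ▸ hxS : x ∈ (⊥ : LieIdeal k L)))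
  · obtain ⟨a, b, hab⟩ := Submodule.mem_span_pair.mp (htop ▸ LieSubmodule.mem_top v : v ∈ I)
    obtain ⟨rfl, rfl⟩ := eq_zero_of_lie_smul_add_smul_eq_zero hvx hvy hxy (by rw [hab, lie_self])
    exact hv (by simpa using hab.symm)

end Rotation

theorem Module.Basis.equivFun_lie_eq_Lbracket {α β : k} (b : Module.Basis (Fin 3) k L)
    (h01 : ⁅b 0, b 1⁆ = b 2) (h12 : ⁅b 1, b 2⁆ = α • b 0) (h20 : ⁅b 2, b 0⁆ = β • b 1)
    (u w : L) : b.equivFun ⁅u, w⁆ = Lbracket α β (b.equivFun u) (b.equivFun w) := by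
  have h10 : ⁅b 1, b 0⁆ = -b 2 := by rw [← lie_skew, h01]
  have h21 : ⁅b 2, b 1⁆ = -(α • b 0) := by rw [← lie_skew, h12]
  have h02 : ⁅b 0, b 2⁆ = -(β • b 1) := by rw [← lie_skew, h20]
  rw [eq_comm, ← LinearEquiv.symm_apply_eq]
  conv_rhs => rw [← b.equivFun.symm_apply_apply u, ← b.equivFun.symm_apply_apply w]
  simp only [Module.Basis.equivFun_symm_apply, Fin.sum_univ_three, Lbracket,
    Matrix.cons_val_zero, Matrix.cons_val_one, Matrix.cons_val_two, Matrix.head_cons,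
    Matrix.tail_cons, lie_add, add_lie, lie_smul, smul_lie, lie_self, smul_zero, add_zero,
    zero_add, h01, h12, h20, h10, h21, h02]
  module

theorem exists_equiv_Lbracket_of_lie_eq [Module.Finite k L] [IsSimple k L]
    (hdim : Module.finrank k L = 3) {v x y : L} (hvx : ⁅v, x⁆ = y) (hvy : ⁅v, y⁆ = -x)
    (hxy : LinearIndependent k ![x, y]) (hv : v ≠ 0) :
    ∃ Δ : k, Δ ≠ 0 ∧ ∃ f : L ≃ₗ[k] (Fin 3 → k),
      ∀ u w : L, f ⁅u, w⁆ = Lbracket Δ Δ (f u) (f w) := by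
  obtain ⟨Δ, hΔ⟩ := exists_eq_smul_of_lie_eq_zero hdim hvx hvy hxy hv (w := ⁅x, y⁆)
    (by simp [leibniz_lie, hvx, hvy])
  have hΔ0 : Δ ≠ 0 := by
    rintro rfl
    exact lie_ne_zero_of_lie_eq hdim hvx hvy hxy hv (by simpa using hΔ)
  let b := (basisOfLinearIndependentOfCardEqFinrank (linearIndependent_of_lie_eq hvx hvy hxy hv)
    (by simp [hdim])).unitsSMul ![1, 1, Units.mk0 Δ hΔ0]
  have hb : ⇑b = ![x, y, Δ • v] := by
    ext i
    fin_cases i <;> simp [b, Module.Basis.unitsSMul_apply]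
  refine ⟨Δ, hΔ0, b.equivFun, b.equivFun_lie_eq_Lbracket ?_ ?_ ?_⟩ <;>
    simp [hb, hΔ, hvx, hvy, ← lie_skew y v]

end

theorem killingForm_apply_self_of_equiv_Lbracket {k L : Type*} [Field k] [LieRing L]
    [LieAlgebra k L] {α β : k} (f : L ≃ₗ[k] (Fin 3 → k))
    (hf : ∀ u w, f ⁅u, w⁆ = Lbracket α β (f u) (f w)) (u : L) :
    killingForm k L u u = -2 * (β * f u 0 ^ 2 + α * f u 1 ^ 2 + α * β * f u 2 ^ 2) := by
  rw [killingForm_apply_apply, ← trace_conj' _ f,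
    trace_eq_matrix_trace k (Pi.basisFun k (Fin 3)), toMatrix_eq_toMatrix', Matrix.trace_fin_three]
  simp only [toMatrix'_apply, LinearEquiv.conj_apply_apply, coe_comp, Function.comp_apply,
    ad_apply, hf, Lbracket, LinearEquiv.apply_symm_apply, Matrix.cons_val_zero, Matrix.cons_val_one,
    Matrix.cons_val, Pi.single_eq_same, ne_eq, Fin.reduceEq, not_false_eq_true,
    Pi.single_eq_of_ne]
  ring

theorem killing_represents_neg_two_iff_general (k : Type*) [Field k] (hchar : (2 : k) ≠ 0)
    (L : Type*) [LieRing L] [LieAlgebra k L] [Module.Finite k L]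
    (hdim : Module.finrank k L = 3) [LieAlgebra.IsSimple k L] :
    (∃ v : L, killingForm k L v v = -2) ↔
      ∃ Δ : k, Δ ≠ 0 ∧ ∃ f : L ≃ₗ[k] (Fin 3 → k),
        ∀ u v : L, f ⁅u, v⁆ = Lbracket (-Δ) (-Δ) (f u) (f v) := by
  constructor
  · rintro ⟨v, hv⟩
    have hv0 := ne_zero_of_killingForm_apply_self_eq (neg_ne_zero.mpr hchar) hv
    have hcube := ad_pow_three_eq_neg_of_killingForm_eq_neg_two hchar hdim hv
    have hsq : trace k L (ad k L v ^ 2) ≠ 0 := by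
      rwa [← killingForm_apply_self_eq_trace_ad_sq, hv, neg_ne_zero]
    obtain ⟨_, ⟨u, rfl⟩, hind⟩ := (ad k L v).exists_linearIndependent_of_trace_sq_ne_zero
      (IsSimple.trace_ad_eq_zero_s15 v) hsq
    obtain ⟨Δ, hΔ, f, hf⟩ := exists_equiv_Lbracket_of_lie_eq hdim rfl
      (by simpa [pow_succ] using congr($hcube u)) hind hv0
    exact ⟨-Δ, neg_ne_zero.mpr hΔ, f, by simpa only [neg_neg] using hf⟩
  · rintro ⟨Δ, hΔ, f, hf⟩
    refine ⟨f.symm ![0, 0, Δ⁻¹], ?_⟩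
    rw [killingForm_apply_self_of_equiv_Lbracket f hf, f.apply_symm_apply]
    simp [pow_two, mul_inv_cancel₀ hΔ, ← mul_assoc]

/-- For a non-split three-dimensional simple Lie algebra `s` over `k` (char ≠ 2) with Killing
form `K`: `K` represents `−2` if and only if `s ≅ L(−Δ,−Δ)` for some `Δ ∈ k*`. -/
theorem killing_represents_neg_two_iff (k : Type*) [Field k] (hchar : (2 : k) ≠ 0)
    (L : Type*) [LieRing L] [LieAlgebra k L] [Module.Finite k L]
    (hdim : Module.finrank k L = 3) [LieAlgebra.IsSimple k L]
    (hnonsplit : ¬ Nonempty (L ≃ₗ⁅k⁆ LieAlgebra.SpecialLinear.sl (Fin 2) k)) :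
    (∃ v : L, killingForm k L v v = -2) ↔
      ∃ Δ : k, Δ ≠ 0 ∧ ∃ f : L ≃ₗ[k] (Fin 3 → k),
        ∀ u v : L, f ⁅u, v⁆ = Lbracket (-Δ) (-Δ) (f u) (f v) :=
  killing_represents_neg_two_iff_general k hchar L hdim
end

section
/- Let k be a field of characteristic not two and α, β ∈ k*. The Lie algebra L(α,β) is split if and only if the binary quadratic form ⟨−α, −β⟩ represents 1 over k (i.e., the Hilbert symbol (−α,−β) equals 1). -/
open LieAlgebra.SpecialLinear

section

variable {k : Type*} [Field k]

def HilbertSymbolEqOne (a b : k) : Prop := ∃ x y : k, a * x ^ 2 + b * y ^ 2 = 1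

theorem hilbertSymbolEqOne_of_mul_sq_add_mul_sq_eq_zero (h2 : (2 : k) ≠ 0) {a b x y : k}
    (ha : a ≠ 0) (hx : x ≠ 0) (h : a * x ^ 2 + b * y ^ 2 = 0) : HilbertSymbolEqOne a b :=
  -- `b = -a m²` with `m = y / x`, so `a X² + b Y² = a (X + m Y) (X - m Y)`;
  -- make the factors `1` and `1 / a`.
  ⟨(a + 1) / (2 * a), (a - 1) * y / (2 * a * x), by
    field_simp
    linear_combination (a - 1) ^ 2 * h⟩

theorem hilbertSymbolEqOne_of_sq_eq_mul_sq_add_mul_sq (h2 : (2 : k) ≠ 0) {a b x y z : k}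
    (ha : a ≠ 0) (hb : b ≠ 0) (h : z ^ 2 = a * x ^ 2 + b * y ^ 2)
    (hne : x ≠ 0 ∨ y ≠ 0 ∨ z ≠ 0) :
    HilbertSymbolEqOne a b := by
  by_cases hz : z = 0
  · subst hz
    have hx : x ≠ 0 := by
      rintro rfl
      have hy : y = 0 := by simpa [hb] using h
      simp [hy] at hne
    exact hilbertSymbolEqOne_of_mul_sq_add_mul_sq_eq_zero (y := y) h2 ha hx
      (by linear_combination -h)
  · exact ⟨x / z, y / z, by field_simp; linear_combination -h⟩

def Lquad (α β : k) (u : Fin 3 → k) : k := β * u 0 ^ 2 + α * u 1 ^ 2 + α * β * u 2 ^ 2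

theorem Lbracket_zero_left (α β : k) (v : Fin 3 → k) : Lbracket α β 0 v = 0 := by
  funext i
  fin_cases i <;> simp [Lbracket]

theorem Lbracket_ad_cube (α β : k) (u v : Fin 3 → k) :
    Lbracket α β u (Lbracket α β u (Lbracket α β u v)) =
      -Lquad α β u • Lbracket α β u v := by
  funext i
  fin_cases i <;> simp [Lbracket, Lquad] <;> ring

theorem hilbertSymbolEqOne_of_Lquad_eq_zero (h2 : (2 : k) ≠ 0) {α β : k} (hα : α ≠ 0)
    (hβ : β ≠ 0) {u : Fin 3 → k} (hu : u ≠ 0) (hQ : Lquad α β u = 0) :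
    HilbertSymbolEqOne (-α) (-β) := by
  refine hilbertSymbolEqOne_of_sq_eq_mul_sq_add_mul_sq (x := β * u 0) (y := α * u 1)
    (z := α * β * u 2) h2 (neg_ne_zero.2 hα) (neg_ne_zero.2 hβ)
    (by unfold Lquad at hQ; linear_combination α * β * hQ) ?_
  contrapose! hu
  funext i
  fin_cases i <;> simp_all

theorem sl2_exists_ad_cube_eq_zero :
    ∃ E F : sl (Fin 2) k, ⁅E, ⁅E, ⁅E, F⁆⁆⁆ = 0 ∧ ⁅E, F⁆ ≠ 0 := by
  refine ⟨single 0 1 (by decide) 1, single 1 0 (by decide) 1, ?_, ?_⟩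
  · ext i j
    fin_cases i <;> fin_cases j <;>
      simp [Ring.lie_def, Matrix.mul_apply, Fin.sum_univ_two, Matrix.single_apply]
  · intro h
    have := congrArg (fun A : sl (Fin 2) k => A.val 0 0) h
    simp [Ring.lie_def] at this

theorem exists_Lbracket_ad_cube_eq_zero {α β : k} (e : (Fin 3 → k) ≃ₗ[k] sl (Fin 2) k)
    (he : ∀ u v : Fin 3 → k, e (Lbracket α β u v) = ⁅e u, e v⁆) :
    ∃ u v : Fin 3 → k,
      Lbracket α β u (Lbracket α β u (Lbracket α β u v)) = 0 ∧
        Lbracket α β u v ≠ 0 := by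
  obtain ⟨E, F, hcube, hne⟩ := sl2_exists_ad_cube_eq_zero (k := k)
  have hsymm : ∀ A B, Lbracket α β (e.symm A) (e.symm B) = e.symm ⁅A, B⁆ := fun A B =>
    e.injective (by simp [he])
  exact ⟨e.symm E, e.symm F, by simp [hsymm, hcube], by simpa [hsymm] using hne⟩

section Splitting

variable {α β x y : k}

/-- The linear map sending the triple `H, E, F` built from `(x, y)` to `!![1, 0; 0, -1]`,
`!![0, 1; 0, 0]`, `!![0, 0; 1, 0]`; the inverse in `splitEquiv` is
`!![a, b; c, -a] ↦ a • H + b • E + c • F`. -/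
def splitMatrix (α β x y : k) (u : Fin 3 → k) : Matrix (Fin 2) (Fin 2) k :=
  !![-(β * y * u 0 + α * x * u 1) / 2, (-x * u 0 + y * u 1 + u 2) / 2;
     α * β * (-x * u 0 + y * u 1 - u 2) / 2, (β * y * u 0 + α * x * u 1) / 2]

theorem splitMatrix_mem_sl (u : Fin 3 → k) : splitMatrix α β x y u ∈ sl (Fin 2) k := by
  show Matrix.trace (splitMatrix α β x y u) = 0
  simp only [Matrix.trace_fin_two, splitMatrix, Matrix.of_apply, Matrix.cons_val',
    Matrix.cons_val_zero, Matrix.cons_val_one, Matrix.cons_val_fin_one]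
  ring

theorem splitMatrix_Lbracket (h2 : (2 : k) ≠ 0) (h : -α * x ^ 2 + -β * y ^ 2 = 1)
    (u v : Fin 3 → k) :
    splitMatrix α β x y (Lbracket α β u v) =
      splitMatrix α β x y u * splitMatrix α β x y v -
        splitMatrix α β x y v * splitMatrix α β x y u := by
  ext i j
  fin_cases i <;> fin_cases j <;> simp [splitMatrix, Lbracket] <;> field_simp
  · ring
  · linear_combination (-2 * (u 0 * v 1 - u 1 * v 0)) * h
  · linear_combination (2 * α * β * (u 0 * v 1 - u 1 * v 0)) * h
  · ring

def splitEquiv (h2 : (2 : k) ≠ 0) (hα : α ≠ 0) (hβ : β ≠ 0)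
    (h : -α * x ^ 2 + -β * y ^ 2 = 1) :
    (Fin 3 → k) ≃ₗ[k] sl (Fin 2) k where
  toFun u := ⟨splitMatrix α β x y u, splitMatrix_mem_sl u⟩
  invFun M := ![2 * y * M.1 0 0 + α * x * M.1 0 1 + x * M.1 1 0 / β,
    2 * x * M.1 0 0 - β * y * M.1 0 1 - y * M.1 1 0 / α,
    M.1 0 1 - M.1 1 0 / (α * β)]
  map_add' u v := by
    ext i j
    fin_cases i <;> fin_cases j <;> simp [splitMatrix] <;> ring
  map_smul' c u := by
    ext i j
    fin_cases i <;> fin_cases j <;> simp [splitMatrix] <;> ring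
  left_inv u := by
    funext i
    fin_cases i <;> simp [splitMatrix] <;> field_simp
    · linear_combination (2 * u 0) * h
    · linear_combination (2 * u 1) * h
    · ring
  right_inv M := by
    have htr : M.1 1 1 = -M.1 0 0 := by
      have htrace : M.1 0 0 + M.1 1 1 = 0 := by rw [← Matrix.trace_fin_two]; exact M.2
      linear_combination htrace
    ext i j
    fin_cases i <;> fin_cases j <;> simp [splitMatrix, htr] <;> field_simp
    · linear_combination (2 * M.1 0 0) * h
    · linear_combination (α * β * M.1 0 1 + M.1 1 0) * h
    · linear_combination (α * β * M.1 0 1 + M.1 1 0) * h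
    · linear_combination (-2 * M.1 0 0) * h

theorem splitEquiv_Lbracket (h2 : (2 : k) ≠ 0) (hα : α ≠ 0) (hβ : β ≠ 0)
    (h : -α * x ^ 2 + -β * y ^ 2 = 1) (u v : Fin 3 → k) :
    splitEquiv h2 hα hβ h (Lbracket α β u v) =
      ⁅splitEquiv h2 hα hβ h u, splitEquiv h2 hα hβ h v⁆ := by
  apply Subtype.ext
  rw [sl_bracket]
  exact splitMatrix_Lbracket h2 h u v

end Splitting

end

/-- `L(α,β)` is split (isomorphic to `sl(2,k)`) if and only if the binary quadratic form
`⟨−α,−β⟩` represents `1`, i.e. the Hilbert symbol `(−α,−β)` equals `1`. -/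
theorem L_split_iff_hilbert (k : Type*) [Field k] (hchar : (2 : k) ≠ 0)
    (α β : k) (hα : α ≠ 0) (hβ : β ≠ 0) :
    (∃ e : (Fin 3 → k) ≃ₗ[k] LieAlgebra.SpecialLinear.sl (Fin 2) k,
        ∀ u v : Fin 3 → k, e (Lbracket α β u v) = ⁅e u, e v⁆) ↔
      ∃ x y : k, -α * x ^ 2 + -β * y ^ 2 = 1 := by
  constructor
  · rintro ⟨e, he⟩
    obtain ⟨u, v, hcube, hne⟩ := exists_Lbracket_ad_cube_eq_zero e he
    rw [Lbracket_ad_cube, smul_eq_zero, neg_eq_zero] at hcube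
    have hu : u ≠ 0 := by
      rintro rfl
      exact hne (Lbracket_zero_left α β v)
    exact hilbertSymbolEqOne_of_Lquad_eq_zero hchar hα hβ hu (hcube.resolve_right hne)
  · rintro ⟨x, y, h⟩
    exact ⟨splitEquiv hchar hα hβ h, splitEquiv_Lbracket hchar hα hβ h⟩
end
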